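/- Let H be a complex Hilbert space, A a positive bounded linear operator on H, and T an A-bounded operator on H with m_A(T) ≠ 0. Then for every x ∈ m_T^A and every y ∈ H: (i) y ∈ x^{A+} if and only if Ty ∈ (Tx)^{A+}; (ii) y ∈ x^{A-} if and only if Ty ∈ (Tx)^{A-}; (iii) for every α ∈ U, y ∈ x^{⊥_α^A} if and only if Ty ∈ (Tx)^{⊥_α^A}. -/

import Mathlib

open ContinuousLinearMap

variable {H : Type*}

/-- The semi-norm induced by the positive operator `A`: `‖x‖_A = √(re ⟪A x, x⟫)`. -/
noncomputable def seminormA [NormedAddCommGroup H] [InnerProductSpace ℂ H]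
    (A : H →L[ℂ] H) (x : H) : ℝ :=
  Real.sqrt ((inner ℂ (A x) x : ℂ)).re

/-- The semi-inner product induced by `A`: `⟨x, y⟩_A = ⟪A x, y⟫`. -/
noncomputable def ipA [NormedAddCommGroup H] [InnerProductSpace ℂ H]
    (A : H →L[ℂ] H) (x y : H) : ℂ :=
  inner ℂ (A x) y

/-- `U = {α ∈ ℂ : |α| = 1, arg α ∈ [0, π)}`. -/
def Uset : Set ℂ := {α : ℂ | ‖α‖ = 1 ∧ 0 ≤ α.arg ∧ α.arg < Real.pi}

/-- `(x)_α^{A+}`. -/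
def plusSetAlpha [NormedAddCommGroup H] [InnerProductSpace ℂ H]
    (A : H →L[ℂ] H) (α : ℂ) (x : H) : Set H :=
  {y | ∀ t : ℝ, 0 ≤ t → seminormA A x ≤ seminormA A (x + ((t : ℂ) * α) • y)}

/-- `(x)_α^{A-}`. -/
def minusSetAlpha [NormedAddCommGroup H] [InnerProductSpace ℂ H]
    (A : H →L[ℂ] H) (α : ℂ) (x : H) : Set H :=
  {y | ∀ t : ℝ, t ≤ 0 → seminormA A x ≤ seminormA A (x + ((t : ℂ) * α) • y)}

/-- `x^{⊥_α^A}`. -/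
def perpSetAlpha [NormedAddCommGroup H] [InnerProductSpace ℂ H]
    (A : H →L[ℂ] H) (α : ℂ) (x : H) : Set H :=
  {y | ∀ t : ℝ, seminormA A x ≤ seminormA A (x + ((t : ℂ) * α) • y)}

/-- `x^{A+} = ⋂_{α ∈ U} (x)_α^{A+}`. -/
def plusSetA [NormedAddCommGroup H] [InnerProductSpace ℂ H]
    (A : H →L[ℂ] H) (x : H) : Set H :=
  ⋂ α ∈ Uset, plusSetAlpha A α x

/-- `x^{A-} = ⋂_{α ∈ U} (x)_α^{A-}`. -/
def minusSetA [NormedAddCommGroup H] [InnerProductSpace ℂ H]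
    (A : H →L[ℂ] H) (x : H) : Set H :=
  ⋂ α ∈ Uset, minusSetAlpha A α x

/-- `x^{⊥_A} = ⋂_{α ∈ U} x^{⊥_α^A}`. -/
def perpSetA [NormedAddCommGroup H] [InnerProductSpace ℂ H]
    (A : H →L[ℂ] H) (x : H) : Set H :=
  ⋂ α ∈ Uset, perpSetAlpha A α x

/-- `m_A(T)`, the minimum `A`-norm of `T`. -/
noncomputable def minNormA [NormedAddCommGroup H] [InnerProductSpace ℂ H]
    (A T : H →L[ℂ] H) : ℝ :=
  sInf ((fun u => seminormA A (T u)) '' {u : H | seminormA A u = 1})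

section aux
variable [NormedAddCommGroup H] [InnerProductSpace ℂ H] [CompleteSpace H]
variable {A : H →L[ℂ] H}

lemma reA_nonneg (hA : A.IsPositive) (x : H) : 0 ≤ (inner ℂ (A x) x : ℂ).re := by
  simpa using (Complex.le_def.mp (hA.inner_nonneg_left x)).1

lemma sem_sq (hA : A.IsPositive) (x : H) :
    (seminormA A x)^2 = (inner ℂ (A x) x : ℂ).re :=
  Real.sq_sqrt (reA_nonneg hA x)

lemma sem_smul (A : H →L[ℂ] H) (c : ℂ) (u : H) :
    seminormA A (c • u) = ‖c‖ * seminormA A u := by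
  unfold seminormA
  rw [map_smul, inner_smul_left, inner_smul_right]
  have h : (starRingEnd ℂ c * (c * inner ℂ (A u) u)).re
      = Complex.normSq c * (inner ℂ (A u) u : ℂ).re := by
    rw [← mul_assoc, mul_comm (starRingEnd ℂ c) c, Complex.mul_conj,
      Complex.re_ofReal_mul]
  rw [h, Real.sqrt_mul (Complex.normSq_nonneg c), Complex.normSq_eq_norm_sq,
    Real.sqrt_sq (norm_nonneg c)]

lemma expandA (hA : A.IsPositive) (x y : H) (c : ℂ) :
    (inner ℂ (A (x + c • y)) (x + c • y) : ℂ).re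
      = (inner ℂ (A x) x : ℂ).re + 2 * (c * inner ℂ (A x) y).re
        + Complex.normSq c * (inner ℂ (A y) y : ℂ).re := by
  have h1 : (inner ℂ (A y) x : ℂ) = starRingEnd ℂ (inner ℂ (A x) y) := by
    have hs : (inner ℂ (A x) y : ℂ) = inner ℂ x (A y) := hA.1 x y
    rw [hs]
    exact (inner_conj_symm (A y) x).symm
  have : (inner ℂ (A (x + c • y)) (x + c • y) : ℂ)
      = inner ℂ (A x) x + c * inner ℂ (A x) y
        + starRingEnd ℂ (c * inner ℂ (A x) y)
        + (Complex.normSq c : ℂ) * inner ℂ (A y) y := by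
    rw [map_add, map_smul]
    simp only [inner_add_left, inner_add_right, inner_smul_left, inner_smul_right, h1]
    rw [map_mul]
    rw [show (Complex.normSq c : ℂ) = starRingEnd ℂ c * c from by
      rw [mul_comm, Complex.mul_conj]]
    ring
  rw [this]
  simp only [Complex.add_re, Complex.conj_re, Complex.re_ofReal_mul]
  ring

lemma sem_le_iff (hA : A.IsPositive) (x z : H) :
    seminormA A x ≤ seminormA A z ↔
      (inner ℂ (A x) x : ℂ).re ≤ (inner ℂ (A z) z : ℂ).re :=
  Real.sqrt_le_sqrt_iff (reA_nonneg hA z)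

lemma plus_char (hA : A.IsPositive) (x y : H) (α : ℂ) :
    (∀ t : ℝ, 0 ≤ t → seminormA A x ≤ seminormA A (x + ((t : ℂ) * α) • y)) ↔
      0 ≤ (α * inner ℂ (A x) y : ℂ).re := by
  set r := (α * (inner ℂ (A x) y : ℂ)).re with hr
  set K := Complex.normSq α * (inner ℂ (A y) y : ℂ).re with hKdef
  have hKnn : 0 ≤ K := mul_nonneg (Complex.normSq_nonneg α) (reA_nonneg hA y)
  have key : ∀ t : ℝ, (seminormA A x ≤ seminormA A (x + ((t : ℂ) * α) • y)) ↔
      0 ≤ 2 * (t * r) + t ^ 2 * K := by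
    intro t
    rw [sem_le_iff hA, expandA hA]
    have h1 : (((t : ℂ) * α) * inner ℂ (A x) y).re = t * r := by
      rw [mul_assoc, Complex.re_ofReal_mul, hr]
    have h2 : Complex.normSq ((t : ℂ) * α) = t ^ 2 * Complex.normSq α := by
      rw [Complex.normSq_mul, Complex.normSq_ofReal]; ring
    rw [h1, h2]
    constructor <;> intro h <;> [skip; skip] <;> rw [hKdef] at * <;> nlinarith
  constructor
  · intro h
    by_contra hneg
    push_neg at hneg
    have hK1 : (0 : ℝ) < K + 1 := by linarith
    set t := -r / (K + 1) with ht
    have htpos : 0 < t := div_pos (by linarith) hK1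
    have ht' : t * (K + 1) = -r := by rw [ht]; field_simp
    have habs := (key t).1 (h t htpos.le)
    nlinarith [habs, ht', htpos, hKnn, mul_pos htpos htpos]
  · intro hrpos t ht
    exact (key t).2 (by nlinarith [mul_nonneg ht hrpos, mul_nonneg (mul_nonneg ht ht) hKnn])

lemma minus_char (hA : A.IsPositive) (x y : H) (α : ℂ) :
    (∀ t : ℝ, t ≤ 0 → seminormA A x ≤ seminormA A (x + ((t : ℂ) * α) • y)) ↔
      (α * inner ℂ (A x) y : ℂ).re ≤ 0 := by
  have hiff : (∀ t : ℝ, t ≤ 0 → seminormA A x ≤ seminormA A (x + ((t : ℂ) * α) • y)) ↔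
      (∀ t : ℝ, 0 ≤ t → seminormA A x ≤ seminormA A (x + ((t : ℂ) * (-α)) • y)) := by
    constructor
    · intro h t ht
      have := h (-t) (by linarith)
      convert this using 4
      push_cast; ring
    · intro h t ht
      have := h (-t) (by linarith)
      convert this using 4
      push_cast; ring
  rw [hiff, plus_char hA x y (-α), neg_mul, Complex.neg_re]
  constructor <;> intro h <;> linarith

end aux

section aux2
variable [NormedAddCommGroup H] [InnerProductSpace ℂ H] [CompleteSpace H]
variable {A T : H →L[ℂ] H}

lemma minNorm_nonneg (A T : H →L[ℂ] H) : 0 ≤ minNormA A T := by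
  apply Real.sInf_nonneg
  rintro a ⟨u, -, rfl⟩
  exact Real.sqrt_nonneg _

lemma lowerA (hA : A.IsPositive) (u : H) :
    minNormA A T * seminormA A u ≤ seminormA A (T u) := by
  have hnn : 0 ≤ seminormA A u := Real.sqrt_nonneg _
  have hnn' : 0 ≤ seminormA A (T u) := Real.sqrt_nonneg _
  rcases eq_or_lt_of_le hnn with h0 | hpos
  · rw [← h0, mul_zero]; exact hnn'
  · set s := seminormA A u with hs
    have hsne : (s : ℂ) ≠ 0 := by
      simp only [ne_eq, Complex.ofReal_eq_zero]; exact ne_of_gt hpos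
    have hv : seminormA A (((s : ℂ))⁻¹ • u) = 1 := by
      rw [sem_smul, norm_inv, Complex.norm_real, Real.norm_eq_abs,
        abs_of_pos hpos, ← hs]
      field_simp
    have hmem : seminormA A (T (((s : ℂ))⁻¹ • u))
        ∈ (fun u => seminormA A (T u)) '' {u : H | seminormA A u = 1} :=
      ⟨_, hv, rfl⟩
    have hbdd : BddBelow ((fun u => seminormA A (T u)) '' {u : H | seminormA A u = 1}) := by
      refine ⟨0, ?_⟩
      rintro a ⟨w, -, rfl⟩
      exact Real.sqrt_nonneg _
    have hle := csInf_le hbdd hmem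
    rw [map_smul, sem_smul, norm_inv, Complex.norm_real, Real.norm_eq_abs,
      abs_of_pos hpos] at hle
    calc minNormA A T * s ≤ (s⁻¹ * seminormA A (T u)) * s := by
          exact mul_le_mul_of_nonneg_right hle hpos.le
      _ = seminormA A (T u) := by field_simp

lemma lower_sq (hA : A.IsPositive) (u : H) :
    (minNormA A T)^2 * (inner ℂ (A u) u : ℂ).re ≤ (inner ℂ (A (T u)) (T u) : ℂ).re := by
  have h := lowerA (T := T) hA u
  have h1 := sem_sq hA u
  have h2 := sem_sq hA (T u)
  have hnn : 0 ≤ seminormA A u := Real.sqrt_nonneg _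
  have hnn' : 0 ≤ seminormA A (T u) := Real.sqrt_nonneg _
  have hmul := mul_le_mul h h (mul_nonneg (minNorm_nonneg A T) hnn) hnn'
  nlinarith [hmul, h1, h2]

lemma re_key (hA : A.IsPositive)
    (x : H) (hx : seminormA A x = 1 ∧ seminormA A (T x) = minNormA A T) (z : H) :
    (inner ℂ (A (T x)) (T z) : ℂ).re = (minNormA A T)^2 * (inner ℂ (A x) z : ℂ).re := by
  set m := minNormA A T with hm
  have hNx : (inner ℂ (A x) x : ℂ).re = 1 := by
    have := sem_sq hA x; rw [hx.1] at this; linarith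
  have hNTx : (inner ℂ (A (T x)) (T x) : ℂ).re = m^2 := by
    have := sem_sq hA (T x); rw [hx.2] at this; linarith
  set r := (inner ℂ (A (T x)) (T z) : ℂ).re - m^2 * (inner ℂ (A x) z : ℂ).re with hr
  set K := (inner ℂ (A (T z)) (T z) : ℂ).re - m^2 * (inner ℂ (A z) z : ℂ).re with hK
  have hKnn : 0 ≤ K := by
    have := lower_sq (T := T) hA z; rw [hK]; linarith
  have hineq : ∀ t : ℝ, 0 ≤ 2 * (t * r) + t ^ 2 * K := by
    intro t
    have h1 := lower_sq (T := T) hA (x + (t : ℂ) • z)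
    have e1 := expandA hA x z (t : ℂ)
    have e2 := expandA hA (T x) (T z) (t : ℂ)
    rw [show T (x + (t : ℂ) • z) = T x + (t : ℂ) • (T z) by
      rw [map_add, map_smul]] at h1
    rw [e1, e2, Complex.normSq_ofReal, Complex.re_ofReal_mul,
      Complex.re_ofReal_mul, hNx, hNTx] at h1
    rw [hr, hK]
    nlinarith [h1]
  by_contra hne
  have hrne : r ≠ 0 := by
    intro h; apply hne; rw [hr] at h; linarith
  have hK1 : (0 : ℝ) < K + 1 := by linarith
  set t := -r / (K + 1) with ht
  have ht' : t * (K + 1) = -r := by rw [ht]; field_simp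
  have habs := hineq t
  have h5 : 2 * (t * r) + t ^ 2 * K = -(t ^ 2) * (K + 2) := by
    have h4 : r = -(t * (K + 1)) := by linarith
    rw [h4]; ring
  rw [h5] at habs
  have ht0 : t = 0 := by nlinarith [sq_nonneg t]
  rw [ht0] at ht'
  apply hrne
  linarith

lemma full_key (hA : A.IsPositive)
    (x : H) (hx : seminormA A x = 1 ∧ seminormA A (T x) = minNormA A T) (z : H) :
    (inner ℂ (A (T x)) (T z) : ℂ) = (((minNormA A T)^2 : ℝ) : ℂ) * inner ℂ (A x) z := by
  have h1 := re_key hA x hx z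
  have h2 := re_key hA x hx (Complex.I • z)
  rw [show T (Complex.I • z) = Complex.I • (T z) from map_smul T Complex.I z] at h2
  rw [inner_smul_right, inner_smul_right] at h2
  simp only [Complex.mul_re, Complex.I_re, Complex.I_im, zero_mul, one_mul,
    zero_sub] at h2
  apply Complex.ext
  · rw [h1, Complex.re_ofReal_mul]
  · simp only [Complex.mul_im, Complex.ofReal_re, Complex.ofReal_im, zero_mul, add_zero]
    nlinarith [h2]

end aux2


theorem statement12 [NormedAddCommGroup H] [InnerProductSpace ℂ H] [CompleteSpace H]
    (A T : H →L[ℂ] H) (hA : A.IsPositive)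
    (hT : ∃ c : ℝ, 0 < c ∧ ∀ z : H, seminormA A (T z) ≤ c * seminormA A z)
    (hTnz : minNormA A T ≠ 0)
    (x : H) (hx : seminormA A x = 1 ∧ seminormA A (T x) = minNormA A T) (y : H) :
    (y ∈ plusSetA A x ↔ T y ∈ plusSetA A (T x)) ∧
    (y ∈ minusSetA A x ↔ T y ∈ minusSetA A (T x)) ∧
    (∀ α ∈ Uset, (y ∈ perpSetAlpha A α x ↔ T y ∈ perpSetAlpha A α (T x))) := by
  have hm_pos : 0 < minNormA A T := lt_of_le_of_ne (minNorm_nonneg A T) (Ne.symm hTnz)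
  have hm2 : (0 : ℝ) < (minNormA A T) ^ 2 := pow_pos hm_pos 2
  have hkey := full_key hA x hx y
  have hre : ∀ α : ℂ, (α * inner ℂ (A (T x)) (T y) : ℂ).re
      = (minNormA A T) ^ 2 * (α * inner ℂ (A x) y : ℂ).re := by
    intro α
    rw [hkey, show α * (((((minNormA A T) ^ 2 : ℝ)) : ℂ) * inner ℂ (A x) y)
        = ((((minNormA A T) ^ 2 : ℝ)) : ℂ) * (α * inner ℂ (A x) y) from by ring,
      Complex.re_ofReal_mul]
  have hplus : ∀ α : ℂ, (y ∈ plusSetAlpha A α x ↔ T y ∈ plusSetAlpha A α (T x)) := by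
    intro α
    have h1 : (y ∈ plusSetAlpha A α x) ↔ 0 ≤ (α * inner ℂ (A x) y : ℂ).re :=
      plus_char hA x y α
    have h2 : (T y ∈ plusSetAlpha A α (T x)) ↔
        0 ≤ (α * inner ℂ (A (T x)) (T y) : ℂ).re := plus_char hA (T x) (T y) α
    rw [h1, h2, hre α]
    constructor
    · intro h; exact mul_nonneg hm2.le h
    · intro h; nlinarith
  have hminus : ∀ α : ℂ, (y ∈ minusSetAlpha A α x ↔ T y ∈ minusSetAlpha A α (T x)) := by
    intro α
    have h1 : (y ∈ minusSetAlpha A α x) ↔ (α * inner ℂ (A x) y : ℂ).re ≤ 0 :=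
      minus_char hA x y α
    have h2 : (T y ∈ minusSetAlpha A α (T x)) ↔
        (α * inner ℂ (A (T x)) (T y) : ℂ).re ≤ 0 := minus_char hA (T x) (T y) α
    rw [h1, h2, hre α]
    constructor
    · intro h; exact mul_nonpos_of_nonneg_of_nonpos hm2.le h
    · intro h; nlinarith
  have hperpsplit : ∀ (z w : H) (α : ℂ),
      (w ∈ perpSetAlpha A α z) ↔ (w ∈ plusSetAlpha A α z ∧ w ∈ minusSetAlpha A α z) := by
    intro z w α
    constructor
    · intro h; exact ⟨fun t _ => h t, fun t _ => h t⟩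
    · rintro ⟨h1, h2⟩ t
      rcases le_total 0 t with ht | ht
      · exact h1 t ht
      · exact h2 t ht
  refine ⟨?_, ?_, ?_⟩
  · simp only [plusSetA, Set.mem_iInter]
    exact ⟨fun h α hα => (hplus α).mp (h α hα), fun h α hα => (hplus α).mpr (h α hα)⟩
  · simp only [minusSetA, Set.mem_iInter]
    exact ⟨fun h α hα => (hminus α).mp (h α hα), fun h α hα => (hminus α).mpr (h α hα)⟩
  · intro α _
    rw [hperpsplit x y α, hperpsplit (T x) (T y) α, hplus α, hminus α]
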